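/- arXiv:2509.14217 — 2 statements merged into one kernel-verified Lean document; each statement's English description precedes it below -/
import Mathlib

section
/- For every real ν and α, with ς = √(1+α²), the derivative in t of the function −(1/ς²) φ(ν/ς) [φ(tς + αν/ς) + (αν/ς) Φ(tς + αν/ς)] equals t · φ(αt + ν) · φ(t). -/
open Real MeasureTheory

/-- Standard normal PDF. -/
noncomputable def stdPdf (x : ℝ) : ℝ := Real.exp (-x ^ 2 / 2) / Real.sqrt (2 * Real.pi)

/-- Gaussian tail function Q. -/
noncomputable def gaussQ (x : ℝ) : ℝ := ∫ s in Set.Ioi x, stdPdf s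

/-- Standard normal CDF. -/
noncomputable def stdCdf (x : ℝ) : ℝ := ∫ s in Set.Iic x, stdPdf s

/-- Owen's T function. -/
noncomputable def owenT (h a : ℝ) : ℝ :=
  ∫ x in (0 : ℝ)..a, Real.exp (-h ^ 2 * (1 + x ^ 2) / 2) / (1 + x ^ 2) / (2 * Real.pi)

/-- Skew-normal PDF with shape `lam`. -/
noncomputable def phiSN (x lam : ℝ) : ℝ := 2 * stdPdf x * gaussQ (-(lam * x))

/-- Skew-normal CDF with shape `lam`. -/
noncomputable def PhiSN (x lam : ℝ) : ℝ := stdCdf x - 2 * owenT x lam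

lemma continuous_stdPdf : Continuous stdPdf := by
  unfold stdPdf; fun_prop

lemma integrable_stdPdf : Integrable stdPdf := by
  have h := (integrable_exp_neg_mul_sq (show (0:ℝ) < 1/2 by norm_num)).div_const (Real.sqrt (2*Real.pi))
  have : stdPdf = fun x => Real.exp (-(1/2) * x^2) / Real.sqrt (2*Real.pi) := by
    funext x; unfold stdPdf; ring_nf
  rw [this]; exact h

lemma stdPdf_hasDerivAt (x : ℝ) : HasDerivAt stdPdf (-x * stdPdf x) x := by
  have h : HasDerivAt (fun y : ℝ => -y^2/2) (-x) x := by
    have := ((hasDerivAt_pow 2 x).neg).div_const 2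
    exact this.congr_deriv (by ring)
  have := (h.exp).div_const (Real.sqrt (2*Real.pi))
  exact this.congr_deriv (by unfold stdPdf; ring)


lemma stdCdf_hasDerivAt (x : ℝ) : HasDerivAt stdCdf (stdPdf x) x := by
  have hint := integrable_stdPdf
  have heq : stdCdf = fun y => stdCdf 0 + ∫ s in (0:ℝ)..y, stdPdf s := by
    funext y
    have := intervalIntegral.integral_Iic_sub_Iic hint.integrableOn hint.integrableOn
      (a := 0) (b := y)
    unfold stdCdf; linarith
  rw [heq]
  exact ((intervalIntegral.integral_hasDerivAt_right hint.intervalIntegrable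
    (continuous_stdPdf.stronglyMeasurableAtFilter _ _)
    continuous_stdPdf.continuousAt)).const_add _

lemma stdPdf_prod (ν α t : ℝ) :
    stdPdf (ν / Real.sqrt (1 + α ^ 2)) *
      stdPdf (t * Real.sqrt (1 + α ^ 2) + α * ν / Real.sqrt (1 + α ^ 2)) =
    stdPdf (α * t + ν) * stdPdf t := by
  have h1 : (0:ℝ) < 1 + α ^ 2 := by positivity
  set ς := Real.sqrt (1 + α ^ 2) with hσ
  have hς2 : ς ^ 2 = 1 + α ^ 2 := Real.sq_sqrt h1.le
  have hςne : ς ≠ 0 := by positivity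
  unfold stdPdf
  rw [div_mul_div_comm, div_mul_div_comm, ← Real.exp_add, ← Real.exp_add]
  congr 1
  have : -(ν / ς) ^ 2 / 2 + -(t * ς + α * ν / ς) ^ 2 / 2
      = -(α * t + ν) ^ 2 / 2 + -t ^ 2 / 2 := by
    field_simp
    linear_combination (ν^2 - ς^2*t^2) * hς2
  rw [this]

theorem gaussian_product_antiderivative_first_moment (ν α t : ℝ) :
    HasDerivAt
      (fun s : ℝ =>
        -(1 / Real.sqrt (1 + α ^ 2) ^ 2) * stdPdf (ν / Real.sqrt (1 + α ^ 2)) *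
          (stdPdf (s * Real.sqrt (1 + α ^ 2) + α * ν / Real.sqrt (1 + α ^ 2)) +
            (α * ν / Real.sqrt (1 + α ^ 2)) *
              stdCdf (s * Real.sqrt (1 + α ^ 2) + α * ν / Real.sqrt (1 + α ^ 2))))
      (t * stdPdf (α * t + ν) * stdPdf t) t := by
  have h1 : (0:ℝ) < 1 + α ^ 2 := by positivity
  set ς := Real.sqrt (1 + α ^ 2) with hσ
  have hς2 : ς ^ 2 = 1 + α ^ 2 := Real.sq_sqrt h1.le
  have hςne : ς ≠ 0 := by positivity
  set b := α * ν / ς with hb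
  set u := t * ς + b with hu
  have hl : HasDerivAt (fun s : ℝ => s * ς + b) ς t := by
    simpa using ((hasDerivAt_id t).mul_const ς).add_const b
  have h2 : HasDerivAt (fun s : ℝ => stdPdf (s * ς + b)) (-u * stdPdf u * ς) t :=
    by have := (stdPdf_hasDerivAt u).comp t hl; exact this
  have h3 : HasDerivAt (fun s : ℝ => b * stdCdf (s * ς + b)) (b * (stdPdf u * ς)) t :=
    by have := (((stdCdf_hasDerivAt u).comp t hl)).const_mul b; exact this
  have h4 := (h2.add h3).const_mul (-(1 / ς ^ 2) * stdPdf (ν / ς))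
  refine h4.congr_deriv ?_
  symm
  have hp := stdPdf_prod ν α t
  have hv : -u * stdPdf u * ς + b * (stdPdf u * ς) = -(t * ς ^ 2) * stdPdf u := by
    rw [hu]; ring
  rw [mul_assoc, ← hp, hv]
  have h5 : ∀ X Y : ℝ, -(1 / ς ^ 2) * X * (-(t * ς ^ 2) * Y) = t * (X * Y) := by
    intro X Y; field_simp
  exact (h5 _ _).symm
end

section
/- Let SNR > 0 and define u(α) = (α√2 − √(π·SNR − α²(π−2))) / √(π(1+α²)) for 0 ≤ α ≤ √(SNR). Then u'(α) ≥ √(2/π) / (1 + α²) for all α in (0, √(SNR)). -/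
open Real MeasureTheory

/-- Normalized argument of the skew-normal CDF in the classification constraint. -/
noncomputable def uFun (SNR α : ℝ) : ℝ :=
  (α * Real.sqrt 2 - Real.sqrt (Real.pi * SNR - α ^ 2 * (Real.pi - 2))) /
    Real.sqrt (Real.pi * (1 + α ^ 2))

theorem uFun_deriv_lower_bound (SNR : ℝ) (hSNR : 0 < SNR) :
    ∀ α ∈ Set.Ioo (0 : ℝ) (Real.sqrt SNR),
      deriv (uFun SNR) α ≥ Real.sqrt (2 / Real.pi) / (1 + α ^ 2) := by
  rintro α ⟨hα0, hαs⟩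
  have hα2 : α ^ 2 < SNR := (Real.lt_sqrt hα0.le).mp hαs
  have hpi := Real.pi_gt_three
  have hP : 0 < Real.pi * SNR - α ^ 2 * (Real.pi - 2) := by nlinarith [sq_nonneg α]
  have hQ : 0 < Real.pi * (1 + α ^ 2) := by positivity
  -- derivative
  have hF : HasDerivAt (fun a : ℝ => Real.pi * SNR - a ^ 2 * (Real.pi - 2))
      (-(2 * α * (Real.pi - 2))) α := by
    have h := ((hasDerivAt_pow 2 α).mul_const (Real.pi - 2)).const_sub (Real.pi * SNR)
    simpa using h.congr_deriv (by ring)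
  have hgd : HasDerivAt (fun a : ℝ => Real.sqrt (Real.pi * SNR - a ^ 2 * (Real.pi - 2)))
      (-(2 * α * (Real.pi - 2)) / (2 * Real.sqrt (Real.pi * SNR - α ^ 2 * (Real.pi - 2)))) α :=
    hF.sqrt (ne_of_gt hP)
  have hN : HasDerivAt
      (fun a : ℝ => a * Real.sqrt 2 - Real.sqrt (Real.pi * SNR - a ^ 2 * (Real.pi - 2)))
      (Real.sqrt 2 - -(2 * α * (Real.pi - 2)) /
        (2 * Real.sqrt (Real.pi * SNR - α ^ 2 * (Real.pi - 2)))) α := by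
    simpa [Pi.sub_def] using ((hasDerivAt_id α).mul_const (Real.sqrt 2)).sub hgd
  have hG : HasDerivAt (fun a : ℝ => Real.pi * (1 + a ^ 2)) (Real.pi * (2 * α)) α := by
    have h := ((hasDerivAt_pow 2 α).const_add 1).const_mul Real.pi
    simpa using h.congr_deriv (by ring)
  have hDd : HasDerivAt (fun a : ℝ => Real.sqrt (Real.pi * (1 + a ^ 2)))
      (Real.pi * (2 * α) / (2 * Real.sqrt (Real.pi * (1 + α ^ 2)))) α := hG.sqrt (ne_of_gt hQ)
  have hu : HasDerivAt (uFun SNR)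
      (((Real.sqrt 2 - -(2 * α * (Real.pi - 2)) /
          (2 * Real.sqrt (Real.pi * SNR - α ^ 2 * (Real.pi - 2)))) *
            Real.sqrt (Real.pi * (1 + α ^ 2)) -
        (α * Real.sqrt 2 - Real.sqrt (Real.pi * SNR - α ^ 2 * (Real.pi - 2))) *
          (Real.pi * (2 * α) / (2 * Real.sqrt (Real.pi * (1 + α ^ 2))))) /
        Real.sqrt (Real.pi * (1 + α ^ 2)) ^ 2) α :=
    hN.div hDd (ne_of_gt (Real.sqrt_pos.mpr hQ))
  rw [hu.deriv, Real.sqrt_div (by norm_num : (0:ℝ) ≤ 2) Real.pi]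
  have hDs : Real.sqrt (Real.pi * (1 + α ^ 2)) = Real.sqrt Real.pi * Real.sqrt (1 + α ^ 2) :=
    Real.sqrt_mul Real.pi_pos.le _
  rw [hDs]
  set g := Real.sqrt (Real.pi * SNR - α ^ 2 * (Real.pi - 2)) with hgdef
  set sp := Real.sqrt Real.pi with hspdef
  set s1 := Real.sqrt (1 + α ^ 2) with hs1def
  set s2 := Real.sqrt 2 with hs2def
  have hg0 : 0 < g := Real.sqrt_pos.mpr hP
  have hsp0 : 0 < sp := Real.sqrt_pos.mpr Real.pi_pos
  have hs10 : 0 < s1 := Real.sqrt_pos.mpr (by positivity)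
  have hs20 : 0 < s2 := Real.sqrt_pos.mpr (by norm_num)
  have hg2 : g ^ 2 = Real.pi * SNR - α ^ 2 * (Real.pi - 2) := Real.sq_sqrt hP.le
  have hsp2 : sp ^ 2 = Real.pi := Real.sq_sqrt Real.pi_pos.le
  have hs12 : s1 ^ 2 = 1 + α ^ 2 := Real.sq_sqrt (by positivity)
  have hs22 : s2 ^ 2 = 2 := Real.sq_sqrt (by norm_num)
  clear_value g sp s1 s2
  have hA : ((s2 - -(2 * α * (Real.pi - 2)) / (2 * g)) * (sp * s1) -
        (α * s2 - g) * (Real.pi * (2 * α) / (2 * (sp * s1)))) / (sp * s1) ^ 2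
      = Real.pi * (s2 * g + α * ((Real.pi - 2) + Real.pi * SNR)) / (g * (sp * s1) ^ 3) := by
    have hDprod : sp ^ 2 * s1 ^ 2 = Real.pi * (1 + α ^ 2) := by rw [hsp2, hs12]
    field_simp
    linear_combination (s2 * g + α * (Real.pi - 2)) * hDprod + Real.pi * α * hg2
  rw [hA, ge_iff_le, div_div, div_le_div_iff₀ (by positivity) (by positivity)]
  clear hF hG hgd hDd hN hu hA hDs hgdef hspdef hs1def hs2def
  have hs1ge : 1 ≤ s1 := by nlinarith [hs12, hs10.le, sq_nonneg (s1 - 1), sq_nonneg (s1 + 1)]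
  have h2 : 2 * (s1 - 1) ≤ α ^ 2 := by nlinarith [hs12]
  have hbound : s2 * g * α ≤ 2 * ((Real.pi - 2) + Real.pi * SNR) := by
    have h1 : (s2 * g * α) ^ 2 ≤ 2 * Real.pi * SNR ^ 2 := by
      have hgle : g ^ 2 ≤ Real.pi * SNR := by nlinarith [sq_nonneg α]
      have hm : g ^ 2 * α ^ 2 ≤ Real.pi * SNR * SNR :=
        mul_le_mul hgle hα2.le (sq_nonneg α) (by positivity)
      calc (s2 * g * α) ^ 2 = s2 ^ 2 * (g ^ 2 * α ^ 2) := by ring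
        _ = 2 * (g ^ 2 * α ^ 2) := by rw [hs22]
        _ ≤ 2 * (Real.pi * SNR * SNR) := by linarith
        _ = 2 * Real.pi * SNR ^ 2 := by ring
    have hx : s2 * g * α ≤ 2 * Real.pi * SNR := by
      have h2' : (s2 * g * α) ^ 2 ≤ (2 * Real.pi * SNR) ^ 2 := by
        nlinarith [h1, mul_pos hSNR hSNR, hpi]
      exact le_of_pow_le_pow_left₀ two_ne_zero (by positivity) h2'
    linarith
  have key : s2 * g * s1 ≤ s2 * g + α * ((Real.pi - 2) + Real.pi * SNR) := by
    have k1 : s2 * g * (2 * (s1 - 1)) ≤ s2 * g * α ^ 2 :=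
      mul_le_mul_of_nonneg_left h2 (mul_pos hs20 hg0).le
    have k2 : s2 * g * α * α ≤ 2 * ((Real.pi - 2) + Real.pi * SNR) * α :=
      mul_le_mul_of_nonneg_right hbound hα0.le
    nlinarith [k1, k2]
  have hcube : g * (sp * s1) ^ 3 = g * (Real.pi * (1 + α ^ 2) * (sp * s1)) := by
    rw [show (sp * s1) ^ 3 = sp ^ 2 * s1 ^ 2 * (sp * s1) by ring, hsp2, hs12]
  rw [hcube]
  have k3 : Real.pi * sp * (1 + α ^ 2) * (s2 * g * s1) ≤
      Real.pi * sp * (1 + α ^ 2) * (s2 * g + α * ((Real.pi - 2) + Real.pi * SNR)) :=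
    mul_le_mul_of_nonneg_left key (by positivity)
  nlinarith [k3]
end
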